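/- Let (E,ℒ,𝒜) be a weakly left-resolving, normal labelled space. Then the groupoid Γ, equipped with the topology whose basis is the collection of sets Z_{s,e:e₁,…,eₙ} (s ∈ S, e,e₁,…,eₙ ∈ E(S)), is a Hausdorff topological space. -/

import Mathlib

open Classical

universe u v w

/-! ## Words over an alphabet -/

/-- Finite-or-infinite words over the alphabet `A`: `Sum.inl l` is the finite word `l`
(with `[]` playing the role of the empty word `ω`), and `Sum.inr f` is the infinite word `f`. -/
abbrev Word (A : Type w) := List A ⊕ (ℕ → A)

/-- The length `|α| ∈ ℕ∞` of a word. -/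
def wlength {A : Type w} : Word A → ℕ∞ :=
  Sum.elim (fun l => (l.length : ℕ∞)) fun _ => ⊤

/-- The finite prefix `α_{1,n}` of a word `α`. -/
def wprefix {A : Type w} : Word A → ℕ → List A :=
  Sum.elim (fun l n => l.take n) fun f n => List.ofFn fun i : Fin n => f i

/-- Concatenation `αβ` of a finite word `α` with a word `β`. -/
def wappend {A : Type w} (α : List A) : Word A → Word A :=
  Sum.elim (fun l => Sum.inl (α ++ l)) fun f =>
    Sum.inr fun n => if h : n < α.length then α.get ⟨n, h⟩ else f (n - α.length)

/-- `β` is a beginning (finite prefix) of the word `α`. -/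
def WPrefix {A : Type w} (β : List A) : Word A → Prop :=
  Sum.elim (fun l => β <+: l) fun f => β = List.ofFn fun i : Fin β.length => f i

/-! ## Triples -/

/-- Formal triples `(α, X, β)` together with a zero element; the inverse semigroup `S`
of a labelled space consists of such elements. -/
inductive Tr (V : Type u) (A : Type w) where
  | zero : Tr V A
  | mk : List A → Set V → List A → Tr V A

/-- The involution `(α,A,β)* = (β,A,α)` (fixing `0`). -/
def Tr.tstar {V : Type u} {A : Type w} : Tr V A → Tr V A
  | .zero => .zero
  | .mk α X β => .mk β X α

/-! ## Labelled spaces -/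

/-- The data of a labelled space `(E, ℒ, 𝒜)`: a directed graph on nonempty vertex/edge
sets, a surjective labelling map onto the alphabet `A`, and a family `𝒜` of subsets
of the vertex set. -/
structure LblSp (V : Type u) (E : Type v) (A : Type w) where
  src : E → V
  rng : E → V
  lab : E → A
  lab_surj : Function.Surjective lab
  nonempty_V : Nonempty V
  nonempty_E : Nonempty E
  𝒜 : Set (Set V)

namespace LblSp

variable {V : Type u} {Ed : Type v} {A : Type w} (Λ : LblSp V Ed A)

/-- `α ≠ ω` is the label of some finite path of the graph. -/
def IsPathLabel (α : List A) : Prop :=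
  ∃ l : List Ed, l ≠ [] ∧ List.Chain' (fun e f => Λ.rng e = Λ.src f) l ∧ l.map Λ.lab = α

/-- `ℒ^*`: the finite labelled paths, together with the empty word. -/
def LStar : Set (List A) := {α | α = [] ∨ Λ.IsPathLabel α}

/-- `ℒ^∞`: the infinite labelled paths. -/
def LInfty : Set (ℕ → A) :=
  {f | ∃ e : ℕ → Ed, (∀ n, Λ.rng (e n) = Λ.src (e (n + 1))) ∧ ∀ n, Λ.lab (e n) = f n}

/-- `ℒ^{≤∞} = ℒ^* ∪ ℒ^∞`, as a predicate on `Word A`. -/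
def IsWordW : Word A → Prop := Sum.elim (· ∈ Λ.LStar) (· ∈ Λ.LInfty)

/-- The relative range `r(X, α)` (with `r(X, ω) = X`). -/
noncomputable def relRange (X : Set V) (α : List A) : Set V :=
  if α = [] then X
  else {v | ∃ (l : List Ed) (h : l ≠ []), List.Chain' (fun e f => Λ.rng e = Λ.src f) l ∧
        l.map Λ.lab = α ∧ Λ.src (l.head h) ∈ X ∧ Λ.rng (l.getLast h) = v}

/-- The range `r(α) = r(E⁰, α)`. -/
noncomputable def rangeL (α : List A) : Set V := Λ.relRange Set.univ α

/-- `𝒜^α = {X ∈ 𝒜 : X ⊆ r(α)}`. -/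
noncomputable def Aset (α : List A) : Set (Set V) := {X | X ∈ Λ.𝒜 ∧ X ⊆ Λ.rangeL α}

/-- `(E, ℒ, 𝒜)` is a labelled space: `𝒜` is closed under finite intersections and
unions, contains all ranges `r(α)` for `α ∈ ℒ^{≥1}`, and is closed under relative ranges. -/
structure IsLS : Prop where
  inter_mem : ∀ X ∈ Λ.𝒜, ∀ Y ∈ Λ.𝒜, X ∩ Y ∈ Λ.𝒜
  union_mem : ∀ X ∈ Λ.𝒜, ∀ Y ∈ Λ.𝒜, X ∪ Y ∈ Λ.𝒜
  range_mem : ∀ α ∈ Λ.LStar, α ≠ [] → Λ.rangeL α ∈ Λ.𝒜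
  relRange_mem : ∀ X ∈ Λ.𝒜, ∀ α ∈ Λ.LStar, Λ.relRange X α ∈ Λ.𝒜

/-- A weakly left-resolving labelled space. -/
structure IsWLR : Prop where
  toIsLS : Λ.IsLS
  wlr : ∀ X ∈ Λ.𝒜, ∀ Y ∈ Λ.𝒜, ∀ α ∈ Λ.LStar, α ≠ [] →
    Λ.relRange (X ∩ Y) α = Λ.relRange X α ∩ Λ.relRange Y α

/-- A weakly left-resolving normal labelled space. -/
structure IsNormal : Prop where
  toIsWLR : Λ.IsWLR
  sdiff_mem : ∀ X ∈ Λ.𝒜, ∀ Y ∈ Λ.𝒜, X \ Y ∈ Λ.𝒜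

/-! ## The inverse semigroup `S` -/

/-- The underlying set of the inverse semigroup
`S = {(α,A,β) : α, β ∈ ℒ^*, A ∈ 𝒜^α ∩ 𝒜^β, A ≠ ∅} ∪ {0}`. -/
def SSet : Set (Tr V A) :=
  {t | t = Tr.zero ∨ ∃ α X β, t = Tr.mk α X β ∧ α ∈ Λ.LStar ∧ β ∈ Λ.LStar ∧
    X ∈ Λ.Aset α ∧ X ∈ Λ.Aset β ∧ X.Nonempty}

/-- The semilattice of idempotents `E(S) = {(α,A,α)} ∪ {0}`. -/
def ESet : Set (Tr V A) :=
  {t | t = Tr.zero ∨ ∃ α X, t = Tr.mk α X α ∧ α ∈ Λ.LStar ∧ X ∈ Λ.Aset α ∧ X.Nonempty}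

/-- The product of `S`. -/
noncomputable def tmul : Tr V A → Tr V A → Tr V A
  | Tr.zero, _ => Tr.zero
  | Tr.mk _ _ _, Tr.zero => Tr.zero
  | Tr.mk α X β, Tr.mk γ Y δ =>
    if β <+: γ ∧ (Λ.relRange X (γ.drop β.length) ∩ Y).Nonempty then
      Tr.mk (α ++ γ.drop β.length) (Λ.relRange X (γ.drop β.length) ∩ Y) δ
    else if γ <+: β ∧ (X ∩ Λ.relRange Y (β.drop γ.length)).Nonempty then
      Tr.mk α (X ∩ Λ.relRange Y (β.drop γ.length)) (δ ++ β.drop γ.length)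
    else Tr.zero

/-! ## Filters in `E(S)`, characters, and the tight spectrum -/

/-- A filter in `E(S)`: a nonempty subset of `E(S) ∖ {0}` closed under products and
upward closed in the natural order (`p ≤ q ↔ pq = p`). -/
def IsFilterES (ξ : Set (Tr V A)) : Prop :=
  ξ.Nonempty ∧ (∀ t ∈ ξ, t ∈ Λ.ESet ∧ t ≠ Tr.zero) ∧
  (∀ p ∈ ξ, ∀ q ∈ ξ, Λ.tmul p q ∈ ξ) ∧
  (∀ p ∈ ξ, ∀ q ∈ Λ.ESet, Λ.tmul p q = p → q ∈ ξ)

/-- An ultrafilter in `E(S)`. -/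
def IsUltraES (ξ : Set (Tr V A)) : Prop :=
  Λ.IsFilterES ξ ∧ ∀ ζ, Λ.IsFilterES ζ → ξ ⊆ ζ → ξ = ζ

/-- The character (indicator function) of a filter. -/
noncomputable def charOf (_Λ : LblSp V Ed A) (ξ : Set (Tr V A)) : Tr V A → Bool :=
  fun t => if t ∈ ξ then true else false

/-- A character of `E(S)`: a nonzero, zero- and meet-preserving `{0,1}`-valued map on
`E(S)` (encoded as a map on triples vanishing outside `E(S)`). -/
def IsChar (φ : Tr V A → Bool) : Prop :=
  (∃ e, φ e = true) ∧ (∀ e, e ∉ Λ.ESet → φ e = false) ∧ φ Tr.zero = false ∧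
  ∀ e ∈ Λ.ESet, ∀ f ∈ Λ.ESet, φ (Λ.tmul e f) = (φ e && φ f)

/-- The tight spectrum `Ê_tight`: the closure, within the space of characters with the
topology of pointwise convergence, of the set of characters of ultrafilters. -/
def tightSpectrum : Set (Tr V A → Bool) :=
  {φ | Λ.IsChar φ} ∩ closure {φ | ∃ ξ, Λ.IsUltraES ξ ∧ φ = Λ.charOf ξ}

/-- A tight filter: a filter whose character lies in the tight spectrum. -/
def IsTightFilter (ξ : Set (Tr V A)) : Prop :=
  Λ.IsFilterES ξ ∧ Λ.charOf ξ ∈ Λ.tightSpectrum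

/-- `ξ_{|β|} = {B : (β, B, β) ∈ ξ}`, the filter of `ξ` at level `β`. -/
def filterAt (_Λ : LblSp V Ed A) (ξ : Set (Tr V A)) (β : List A) : Set (Set V) :=
  {B | Tr.mk β B β ∈ ξ}

/-- `α` is the word associated with the filter `ξ` (i.e. `ξ = ξ^α`): the nonempty finite
beginnings of `α` are exactly the words appearing in elements of `ξ`. -/
def HasWord (_Λ : LblSp V Ed A) (ξ : Set (Tr V A)) (α : Word A) : Prop :=
  ∀ β : List A, β ≠ [] → ((∃ B, Tr.mk β B β ∈ ξ) ↔ WPrefix β α)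

/-! ## Filters and ultrafilters in `𝒜^β` -/

/-- A filter in the Boolean algebra `𝒜^β`. -/
def IsFilterAset (β : List A) (F : Set (Set V)) : Prop :=
  F.Nonempty ∧ F ⊆ Λ.Aset β ∧ (∀ X ∈ F, X.Nonempty) ∧
  (∀ X ∈ F, ∀ Y ∈ F, X ∩ Y ∈ F) ∧ (∀ X ∈ F, ∀ Y ∈ Λ.Aset β, X ⊆ Y → Y ∈ F)

/-- An ultrafilter in `𝒜^β` (an element of `X_β`). -/
def IsUltraAset (β : List A) (F : Set (Set V)) : Prop :=
  Λ.IsFilterAset β F ∧ ∀ G, Λ.IsFilterAset β G → F ⊆ G → F = G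

/-- The gluing map `g_{(α)β}(F) = {C ∩ r(αβ) : C ∈ F}` on ultrafilters. -/
noncomputable def gmap (α β : List A) (F : Set (Set V)) : Set (Set V) :=
  {X | ∃ C ∈ F, X = C ∩ Λ.rangeL (α ++ β)}

/-- The cutting map `h_{[α]β}(F) = {C ∈ 𝒜^β : D ⊆ C for some D ∈ F}` on ultrafilters. -/
noncomputable def hmap (α β : List A) (F : Set (Set V)) : Set (Set V) :=
  {C | C ∈ Λ.Aset β ∧ ∃ D ∈ F, D ⊆ C}

/-! ## Cutting and gluing of (tight) filters in `E(S)` -/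

/-- The cutting map `H_{[α]β} : T^{αβ} → T^{(α)β}` (word-free formulation): the filter
whose family is `η_n = h_{[α]β_{1,n}}(ξ_{n+|α|})`; `H_{[ω]β}` is the identity. -/
noncomputable def Hcut (α : List A) (ξ : Set (Tr V A)) : Set (Tr V A) :=
  if α = [] then ξ
  else {t | ∃ δ B, t = Tr.mk δ B δ ∧ B ∈ Λ.Aset δ ∧
        ∃ D, Tr.mk (α ++ δ) D (α ++ δ) ∈ ξ ∧ D ⊆ B}

/-- The gluing map `G_{(α)β} : T^{(α)β} → T^{αβ}` (word-free formulation): the filter with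
family `η_{|α|+n} = g_{(α)β_{1,n}}(ξ_n)` for `n ≥ 1` and `η_i = f_{α_{1,i}[…]}(…)` for
`i ≤ |α|`, with the two cases according to whether the word of `ξ` is empty (`β = ω`)
or not; `G_{(ω)β}` is the identity. -/
noncomputable def Gglue (α : List A) (ξ : Set (Tr V A)) : Set (Tr V A) :=
  if α = [] then ξ
  else if ∃ (δ : List A) (B : Set V), δ ≠ [] ∧ Tr.mk δ B δ ∈ ξ then
    {t | ∃ δ B, t = Tr.mk δ B δ ∧
      ((α <+: δ ∧ α ≠ δ ∧ ∃ C, Tr.mk (δ.drop α.length) C (δ.drop α.length) ∈ ξ ∧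
          B = C ∩ Λ.rangeL δ) ∨
       (δ <+: α ∧ B ∈ Λ.Aset δ ∧ ∃ (b : A) (C : Set V), Tr.mk [b] C [b] ∈ ξ ∧
          Λ.relRange B (α.drop δ.length ++ [b]) = C ∩ Λ.rangeL (α ++ [b])))}
  else
    {t | ∃ δ B, t = Tr.mk δ B δ ∧ δ <+: α ∧ B ∈ Λ.Aset δ ∧
      ∃ C, Tr.mk [] C [] ∈ ξ ∧ Λ.relRange B (α.drop δ.length) = C ∩ Λ.rangeL α}

/-- `T^β`: the set of tight filters with associated word `β`. -/
def TWord (β : Word A) : Set (Set (Tr V A)) :=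
  {ξ | Λ.IsTightFilter ξ ∧ Λ.HasWord ξ β}

/-- `T^{(α)β} = {ξ ∈ T^β : r(α) ∈ ξ_0}` (equal to `T^β` when `α = ω`), the domain of the
gluing map `G_{(α)β}`. -/
def TGlueDom (α : List A) (β : Word A) : Set (Set (Tr V A)) :=
  {ξ | Λ.IsTightFilter ξ ∧ Λ.HasWord ξ β ∧ (α ≠ [] → Tr.mk [] (Λ.rangeL α) [] ∈ ξ)}

/-! ## The groupoid `Γ` -/

/-- The defining relation of
`Γ = {(ξ^{aγ}, |a|-|b|, η^{bγ}) ∈ T × ℤ × T : H_{[a]γ}(ξ^{aγ}) = H_{[b]γ}(η^{bγ})}`. -/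
def InGamma (η : Set (Tr V A)) (m : ℤ) (ξ : Set (Tr V A)) : Prop :=
  ∃ (a b : List A) (γ : Word A), a ∈ Λ.LStar ∧ b ∈ Λ.LStar ∧ Λ.IsWordW γ ∧
    η ∈ Λ.TWord (wappend a γ) ∧ ξ ∈ Λ.TWord (wappend b γ) ∧
    m = (a.length : ℤ) - (b.length : ℤ) ∧ Λ.Hcut a η = Λ.Hcut b ξ

/-- `Γ` as a set of raw triples. -/
def GammaRaw : Set (Set (Tr V A) × ℤ × Set (Tr V A)) :=
  {p | Λ.InGamma p.1 p.2.1 p.2.2}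

/-- The basic set `Z_{s,e:e₁,…,eₙ}` of `Γ` (raw version), for `s = (μ, X, ν)`:
triples `(η^{μγ}, |μ|-|ν|, ξ^{νγ}) ∈ Γ` with `e ∈ ξ`, `eᵢ ∉ ξ` and
`H_{[μ]γ}(η) = H_{[ν]γ}(ξ)`. -/
noncomputable def ZrawGen (μ ν : List A) (e : Tr V A) (es : List (Tr V A)) :
    Set (Set (Tr V A) × ℤ × Set (Tr V A)) :=
  {p | Λ.InGamma p.1 p.2.1 p.2.2 ∧ p.2.1 = (μ.length : ℤ) - (ν.length : ℤ) ∧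
       e ∈ p.2.2 ∧ (∀ f ∈ es, f ∉ p.2.2) ∧
       ∃ γ : Word A, Λ.HasWord p.1 (wappend μ γ) ∧ Λ.HasWord p.2.2 (wappend ν γ) ∧
         Λ.Hcut μ p.1 = Λ.Hcut ν p.2.2}

/-- `Z_s = Z_{s, s*s}` for `s = (μ, X, ν)` (raw version). -/
noncomputable def Zraw (μ : List A) (X : Set V) (ν : List A) :
    Set (Set (Tr V A) × ℤ × Set (Tr V A)) :=
  Λ.ZrawGen μ ν (Tr.mk ν X ν) []

/-- The basic set `V_{e:e₁,…,eₙ} = U_{e:e₁,…,eₙ} ∩ T` of the tight filter space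
(raw version). -/
def VrawGen (e : Tr V A) (es : List (Tr V A)) : Set (Set (Tr V A)) :=
  {ξ | Λ.IsTightFilter ξ ∧ e ∈ ξ ∧ ∀ f ∈ es, f ∉ ξ}

/-- The shift map `σ : T^{(1)} → T`, `σ(ξ^{aγ}) = H_{[a]γ}(ξ^{aγ})` (extended by the
identity off its domain). -/
noncomputable def sigmaMap (ξ : Set (Tr V A)) : Set (Tr V A) :=
  if h : ∃ a : A, ∃ B : Set V, Tr.mk [a] B [a] ∈ ξ then Λ.Hcut [h.choose] ξ else ξ

/-- The Renault–Deaconu basic set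
`𝒱(X, Y, m, n) = {(η, m-n, ξ) ∈ Γ : (η, ξ) ∈ X × Y, σ^m(η) = σ^n(ξ)}` (raw version). -/
noncomputable def VrdRaw (Xs Ys : Set (Set (Tr V A))) (m n : ℕ) :
    Set (Set (Tr V A) × ℤ × Set (Tr V A)) :=
  {p | Λ.InGamma p.1 p.2.1 p.2.2 ∧ p.2.1 = (m : ℤ) - (n : ℤ) ∧
       p.1 ∈ Xs ∧ p.2.2 ∈ Ys ∧ (Λ.sigmaMap)^[m] p.1 = (Λ.sigmaMap)^[n] p.2.2}

/-! ## The groupoid of germs `𝒢_tight` -/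

/-- The action `θ_s(φ)(e) = φ(s* e s)` of `S` on characters. -/
noncomputable def theta (s : Tr V A) (φ : Tr V A → Bool) : Tr V A → Bool :=
  fun e => if e ∈ Λ.ESet then φ (Λ.tmul (Λ.tmul (Tr.tstar s) e) s) else false

/-- `Ω = {(s, φ) ∈ S × Ê_tight : φ ∈ D_{s*s}}`. -/
noncomputable def Omega : Set (Tr V A × (Tr V A → Bool)) :=
  {p | p.1 ∈ Λ.SSet ∧ p.2 ∈ Λ.tightSpectrum ∧ p.2 (Λ.tmul (Tr.tstar p.1) p.1) = true}

/-- The germ equivalence relation on `Ω`: `(s,φ) ∼ (t,ψ)` iff `φ = ψ` and there is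
`e ∈ E(S)` with `φ(e) = 1` and `se = te`. -/
noncomputable def germEquiv (p q : Tr V A × (Tr V A → Bool)) : Prop :=
  p.2 = q.2 ∧ ∃ e ∈ Λ.ESet, p.2 e = true ∧ Λ.tmul p.1 e = Λ.tmul q.1 e

/-- The map `Φ` at the level of `Ω`: for `t = (β, X, γ)` and `φ` with filter `ξ^α`
(where `α = γα'`), `Φ[t,φ] = ((G_{(β)α'} ∘ H_{[γ]α'})(ξ^α), |β|-|γ|, ξ^α)`. -/
noncomputable def PhiRaw : Tr V A → (Tr V A → Bool) → Set (Tr V A) × ℤ × Set (Tr V A)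
  | Tr.zero, _ => (∅, 0, ∅)
  | Tr.mk β _ γ, φ =>
      (Λ.Gglue β (Λ.Hcut γ {e | φ e = true}), (β.length : ℤ) - (γ.length : ℤ),
        {e | φ e = true})

/-! ## Miscellaneous notions -/

/-- `ℒ(XE¹) = {ℒ(e) : e ∈ E¹, s(e) ∈ X}`. -/
def labE (X : Set V) : Set A := {a | ∃ e, Λ.lab e = a ∧ Λ.src e ∈ X}

/-- The set `E⁰_sink` of sinks. -/
def sinks : Set V := {v | ∀ e, Λ.src e ≠ v}

/-- The filter in `E(S)` associated with a pair (word, complete family). -/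
def pairFilter (_Λ : LblSp V Ed A) (α : Word A) (F : ℕ → Set (Set V)) : Set (Tr V A) :=
  {t | ∃ (n : ℕ) (B : Set V), (n : ℕ∞) ≤ wlength α ∧ B ∈ F n ∧
    t = Tr.mk (wprefix α n) B (wprefix α n)}

/-- A complete family for the word `α`: `F n` is a filter in `𝒜^{α_{1,n}}` for
`1 ≤ n ≤ |α|` (`F 0` is a filter in `𝒜` or empty, and a filter if `α = ω`), and
`F n = {X ∈ 𝒜^{α_{1,n}} : r(X, α_{n+1}) ∈ F (n+1)}` for all `n < |α|`. -/
noncomputable def IsCompleteFamily (α : Word A) (F : ℕ → Set (Set V)) : Prop :=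
  Λ.IsWordW α ∧
  (∀ n : ℕ, 1 ≤ n → (n : ℕ∞) ≤ wlength α → Λ.IsFilterAset (wprefix α n) (F n)) ∧
  (F 0 = ∅ ∨ Λ.IsFilterAset [] (F 0)) ∧
  (wlength α = 0 → Λ.IsFilterAset [] (F 0)) ∧
  (∀ n : ℕ, ((n + 1 : ℕ) : ℕ∞) ≤ wlength α →
    F n = {X | X ∈ Λ.Aset (wprefix α n) ∧
      Λ.relRange X ((wprefix α (n + 1)).drop n) ∈ F (n + 1)})

/-! ## The tight filter space `T` and the groupoid `Γ` as types -/

/-- The space `T` of tight filters. -/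
structure TightT where
  carrier : Set (Tr V A)
  tight : Λ.IsTightFilter carrier

/-- The topology of `T`, induced from pointwise convergence of characters. -/
noncomputable instance : TopologicalSpace Λ.TightT :=
  TopologicalSpace.induced (fun ξ => Λ.charOf ξ.carrier) inferInstance

/-- The groupoid `Γ ⊆ T × ℤ × T` as a type. -/
structure GammaT where
  fst : Λ.TightT
  mid : ℤ
  lst : Λ.TightT
  mem : Λ.InGamma fst.carrier mid lst.carrier

/-- The raw triple underlying an element of `Γ`. -/
def rawOf (p : Λ.GammaT) : Set (Tr V A) × ℤ × Set (Tr V A) :=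
  (p.fst.carrier, p.mid, p.lst.carrier)

/-- The collection of all sets `Z_{s,e:e₁,…,eₙ}` (for `s ∈ S`, `e, eᵢ ∈ E(S)`),
as subsets of `Γ`. -/
noncomputable def ZBasisT : Set (Set Λ.GammaT) :=
  {Z | ∃ (μ : List A) (X : Set V) (ν : List A) (e : Tr V A) (es : List (Tr V A)),
    Tr.mk μ X ν ∈ Λ.SSet ∧ e ∈ Λ.ESet ∧ (∀ f ∈ es, f ∈ Λ.ESet) ∧
    Z = {p : Λ.GammaT | Λ.rawOf p ∈ Λ.ZrawGen μ ν e es}}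

/-- The topology on `Γ` induced by the isomorphism `Φ` from the germ topology of
`𝒢_tight`, generated by the images of the basic sets `Θ(s, 𝒰)` with `𝒰 ⊆ D_{s*s}`
open in the tight spectrum. -/
noncomputable def PhiTopology : TopologicalSpace Λ.GammaT :=
  TopologicalSpace.generateFrom
    {Z | ∃ (s : Tr V A) (U : Set (Tr V A → Bool)), s ∈ Λ.SSet ∧
      (∃ W, IsOpen W ∧ U = W ∩ Λ.tightSpectrum) ∧
      (∀ φ ∈ U, φ (Λ.tmul (Tr.tstar s) s) = true) ∧
      Z = {p : Λ.GammaT | ∃ φ ∈ U, (s, φ) ∈ Λ.Omega ∧ Λ.PhiRaw s φ = Λ.rawOf p}}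

end LblSp

/-!
Distinct points of `Γ` are separated by disjoint basic sets `Z`. If their last coordinates
differ, some idempotent `e` lies in one and not in the other, and a basic set requiring `e`
is disjoint from one excluding it. If the last coordinates agree, lengthening the shorter
witness word (`H_{[xy]γ} = H_{[y]γ} ∘ H_{[x]yγ}`) puts both points into sets `Z_{(μ,X,ν)}` and
`Z_{(μ',X',ν)}` with the same `ν`. Since the cutting map `H_{[μ]γ}` is injective on `T^{μγ}`,
a point of `Z_{(μ,X,ν)}` is determined by its last coordinate, so `μ ≠ μ'`; and two such sets
with `μ ≠ μ'` are disjoint, because the last coordinate fixes `γ`, the middle one `|μ|`, and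
then the word `μγ` of the first coordinate fixes `μ`.
-/

section Words

variable {A : Type w}

theorem wPrefix_inr_iff {β : List A} {f : ℕ → A} :
    WPrefix β (Sum.inr f) ↔ ∀ i (hi : i < β.length), β[i] = f i := by
  refine ⟨fun h i hi => ?_, fun h => List.ext_getElem (by simp) fun i hi _ => by simp [h i hi]⟩
  rw [List.getElem_of_eq h (by simpa using hi), List.getElem_ofFn]

theorem wPrefix_wappend (β : List A) (γ : Word A) : WPrefix β (wappend β γ) := by
  cases γ with
  | inl l => exact List.prefix_append β l
  | inr f => exact wPrefix_inr_iff.2 fun i hi => by simp [hi]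

theorem wappend_append (x y : List A) (γ : Word A) :
    wappend (x ++ y) γ = wappend x (wappend y γ) := by
  cases γ with
  | inl l => simp [wappend]
  | inr f =>
    refine congrArg Sum.inr (funext fun n => ?_)
    by_cases hx : n < x.length
    · simp [hx, List.getElem_append_left, Nat.lt_add_right]
    · by_cases hy : n < x.length + y.length
      · simp [hx, hy, Nat.sub_lt_left_of_lt_add (not_lt.1 hx) hy,
          List.getElem_append_right (not_lt.1 hx)]
      · simp [hx, hy, Nat.sub_sub, show ¬ n - x.length < y.length by omega]

theorem wappend_injective (x : List A) : Function.Injective (wappend x) := by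
  rintro (l | f) (l' | f') h <;> simp only [wappend, Sum.elim_inl, Sum.elim_inr,
    reduceCtorEq, Sum.inl.injEq, Sum.inr.injEq, List.append_cancel_left_eq] at h
  · rw [h]
  · refine congrArg Sum.inr (funext fun n => ?_)
    simpa using congrFun h (n + x.length)

theorem eq_of_wappend_eq {x y : List A} {γ : Word A} (hl : x.length = y.length)
    (h : wappend x γ = wappend y γ) : x = y := by
  cases γ with
  | inl l => simpa [wappend] using h
  | inr f =>
    refine List.ext_getElem hl fun i h1 h2 => ?_
    simpa [wappend, h1, h2] using congrFun (Sum.inr.inj h) i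

theorem WPrefix.prefix_of_length_le {x y : List A} {w : Word A} (hx : WPrefix x w)
    (hy : WPrefix y w) (hl : x.length ≤ y.length) : x <+: y := by
  cases w with
  | inl l => exact List.prefix_of_prefix_length_le hx hy hl
  | inr f =>
    rw [wPrefix_inr_iff] at hx hy
    rw [List.prefix_iff_eq_take]
    exact List.ext_getElem (by simpa using hl) fun i h1 h2 => by simp [hx, hy]

theorem WPrefix.prefix_or_prefix {x y : List A} {w : Word A} (hx : WPrefix x w)
    (hy : WPrefix y w) : x <+: y ∨ y <+: x :=
  (le_total x.length y.length).imp (hx.prefix_of_length_le hy) (hy.prefix_of_length_le hx)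

theorem wappend_eq_wappend_of_length_le {x y : List A} {γ γ' : Word A}
    (h : wappend x γ = wappend y γ') (hl : x.length ≤ y.length) :
    ∃ τ, y = x ++ τ ∧ γ = wappend τ γ' := by
  obtain ⟨τ, rfl⟩ :=
    (wPrefix_wappend x γ).prefix_of_length_le (h ▸ wPrefix_wappend y γ') hl
  exact ⟨τ, rfl, wappend_injective x (h.trans (wappend_append x τ γ'))⟩

theorem word_ext {w w' : Word A} (h : ∀ β : List A, β ≠ [] → (WPrefix β w ↔ WPrefix β w')) :
    w = w' := by
  have ofFn_wPrefix (f : ℕ → A) (n : ℕ) : WPrefix (List.ofFn fun i : Fin n => f i) (Sum.inr f) :=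
    wPrefix_inr_iff.2 fun i hi => by simp
  have ofFn_ne_nil (f : ℕ → A) (n : ℕ) : (List.ofFn fun i : Fin (n + 1) => f i) ≠ [] := by simp
  rcases w with l | f <;> rcases w' with l' | f'
  · have prefix_of_imp {l l' : List A} (h : ∀ β : List A, β ≠ [] → β <+: l → β <+: l') :
        l <+: l' := by
      rcases eq_or_ne l [] with rfl | hl
      · exact List.nil_prefix
      · exact h l hl (List.prefix_refl l)
    have hll' := prefix_of_imp fun β hβ => (h β hβ).1
    have hl'l := prefix_of_imp fun β hβ => (h β hβ).2
    exact congrArg Sum.inl (hll'.eq_of_length (hll'.length_le.antisymm hl'l.length_le))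
  · have := ((h _ (ofFn_ne_nil f' l.length)).2 (ofFn_wPrefix f' _)).length_le
    simp at this
  · have := ((h _ (ofFn_ne_nil f l'.length)).1 (ofFn_wPrefix f _)).length_le
    simp at this
  · refine congrArg Sum.inr (funext fun n => ?_)
    have := wPrefix_inr_iff.1 ((h _ (ofFn_ne_nil f n)).1 (ofFn_wPrefix f _)) n (by simp)
    rwa [List.getElem_ofFn] at this

end Words

namespace LblSp

variable {V : Type u} {Ed : Type v} {A : Type w} {Λ : LblSp V Ed A}

theorem relRange_nil (X : Set V) : Λ.relRange X [] = X := if_pos rfl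

theorem rangeL_nil : Λ.rangeL [] = Set.univ := relRange_nil _

theorem mem_Aset_nil {X : Set V} : X ∈ Λ.Aset [] ↔ X ∈ Λ.𝒜 := by
  simp [Aset, rangeL_nil]

theorem rangeL_append_subset (x y : List A) : Λ.rangeL (x ++ y) ⊆ Λ.rangeL y := by
  rcases eq_or_ne y [] with rfl | hy
  · simp [rangeL_nil]
  rintro v hv
  rw [rangeL, relRange, if_neg (by simp [hy])] at hv
  obtain ⟨l, -, hchain, hlab, -, rfl⟩ := hv
  have hlen : l.length = x.length + y.length := by simpa using congrArg List.length hlab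
  have hdrop : l.drop x.length ≠ [] := by simpa [hlen] using hy
  rw [rangeL, relRange, if_neg hy]
  refine ⟨l.drop x.length, hdrop, hchain.suffix (List.drop_suffix _ _), ?_, trivial, ?_⟩
  · simp [List.map_drop, hlab]
  · rw [List.getLast_drop hdrop]

theorem tmul_mk_mk_of_prefix {α β γ δ : List A} {X Y : Set V} (h : γ <+: β) :
    Λ.tmul (Tr.mk α X β) (Tr.mk γ Y δ) =
      if (X ∩ Λ.relRange Y (β.drop γ.length)).Nonempty then
        Tr.mk α (X ∩ Λ.relRange Y (β.drop γ.length)) (δ ++ β.drop γ.length)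
      else Tr.zero := by
  by_cases hβγ : β <+: γ
  · obtain rfl := hβγ.eq_of_length (hβγ.length_le.antisymm h.length_le)
    simp [tmul, relRange_nil]
  · simp [tmul, hβγ, h]

section Filters

variable {ξ ξ' : Set (Tr V A)} {α β δ ρ : List A} {γ w w' : Word A} {B D : Set V}

theorem IsFilterES.exists_mk (hξ : Λ.IsFilterES ξ) {t : Tr V A} (ht : t ∈ ξ) :
    ∃ β B, t = Tr.mk β B β ∧ β ∈ Λ.LStar ∧ B ∈ Λ.Aset β ∧ B.Nonempty := by
  obtain ⟨h0 | ⟨β, B, rfl, hβ⟩, hne⟩ := hξ.2.1 t ht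
  · exact absurd h0 hne
  · exact ⟨β, B, rfl, hβ⟩

theorem IsFilterES.of_mk_mem (hξ : Λ.IsFilterES ξ) (h : Tr.mk β B β ∈ ξ) :
    β ∈ Λ.LStar ∧ B ∈ Λ.Aset β ∧ B.Nonempty := by
  obtain ⟨β', B', heq, hβ'⟩ := hξ.exists_mk h
  obtain ⟨rfl, rfl, -⟩ := Tr.mk.inj heq
  exact hβ'

theorem IsFilterES.mk_mem_of_subset_relRange (hξ : Λ.IsFilterES ξ)
    (hD : Tr.mk (β ++ ρ) D (β ++ ρ) ∈ ξ) (hB : Tr.mk β B β ∈ Λ.ESet)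
    (hDB : D ⊆ Λ.relRange B ρ) : Tr.mk β B β ∈ ξ := by
  refine hξ.2.2.2 _ hD _ hB ?_
  rw [tmul_mk_mk_of_prefix (List.prefix_append β ρ), List.drop_left,
    Set.inter_eq_left.2 hDB, if_pos (hξ.of_mk_mem hD).2.2]

theorem HasWord.unique (h : Λ.HasWord ξ w) (h' : Λ.HasWord ξ w') : w = w' :=
  word_ext fun β hβ => (h β hβ).symm.trans (h' β hβ)

theorem HasWord.exists_mk_mem (h : Λ.HasWord ξ (wappend β γ)) (hβ : β ≠ []) :
    ∃ B, Tr.mk β B β ∈ ξ :=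
  (h β hβ).2 (wPrefix_wappend β γ)

theorem HasWord.mem_LStar (hξ : Λ.IsFilterES ξ) (h : Λ.HasWord ξ (wappend β γ)) :
    β ∈ Λ.LStar := by
  rcases eq_or_ne β [] with rfl | hβ
  · exact Or.inl rfl
  · obtain ⟨B, hB⟩ := h.exists_mk_mem hβ
    exact (hξ.of_mk_mem hB).1

theorem HasWord.exists_mem_Aset (hξ : Λ.IsFilterES ξ) (h : Λ.HasWord ξ (wappend β γ)) :
    ∃ B ∈ Λ.Aset β, B.Nonempty := by
  rcases eq_or_ne β [] with rfl | hβ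
  · obtain ⟨t, ht⟩ := hξ.1
    obtain ⟨_, B, -, -, hB, hBne⟩ := hξ.exists_mk ht
    exact ⟨B, mem_Aset_nil.2 hB.1, hBne⟩
  · obtain ⟨B, hB⟩ := h.exists_mk_mem hβ
    exact ⟨B, (hξ.of_mk_mem hB).2⟩

theorem Hcut_nil (ξ : Set (Tr V A)) : Λ.Hcut [] ξ = ξ := if_pos rfl

theorem mem_Hcut (hα : α ≠ []) {t : Tr V A} :
    t ∈ Λ.Hcut α ξ ↔ ∃ δ B, t = Tr.mk δ B δ ∧ B ∈ Λ.Aset δ ∧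
      ∃ D, Tr.mk (α ++ δ) D (α ++ δ) ∈ ξ ∧ D ⊆ B := by
  rw [Hcut, if_neg hα]
  rfl

theorem mk_mem_Hcut (hα : α ≠ []) :
    Tr.mk δ B δ ∈ Λ.Hcut α ξ ↔
      B ∈ Λ.Aset δ ∧ ∃ D, Tr.mk (α ++ δ) D (α ++ δ) ∈ ξ ∧ D ⊆ B := by
  simp [mem_Hcut hα]

theorem Hcut_append (hξ : Λ.IsFilterES ξ) (x y : List A) :
    Λ.Hcut (x ++ y) ξ = Λ.Hcut y (Λ.Hcut x ξ) := by
  rcases eq_or_ne x [] with rfl | hx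
  · rw [List.nil_append, Hcut_nil]
  rcases eq_or_ne y [] with rfl | hy
  · rw [List.append_nil, Hcut_nil]
  ext t
  simp only [mem_Hcut hy, mem_Hcut (List.append_ne_nil_of_left_ne_nil hx y), mk_mem_Hcut hx,
    List.append_assoc]
  refine exists₂_congr fun δ B => and_congr_right fun _ => and_congr_right fun _ => ⟨?_, ?_⟩
  · rintro ⟨D, hD, hDB⟩
    have hDA := (hξ.of_mk_mem hD).2.1
    exact ⟨D, ⟨⟨hDA.1, hDA.2.trans (rangeL_append_subset x _)⟩, D, hD, subset_rfl⟩, hDB⟩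
  · rintro ⟨D, ⟨-, D', hD', hD'D⟩, hDB⟩
    exact ⟨D', hD', hD'D.trans hDB⟩

theorem subset_of_Hcut_eq (hξ : Λ.IsFilterES ξ) (hξ' : Λ.IsFilterES ξ')
    (hw : Λ.HasWord ξ (wappend α γ)) (hα : α ≠ []) (h : Λ.Hcut α ξ = Λ.Hcut α ξ') :
    ξ ⊆ ξ' := by
  intro t ht
  obtain ⟨β, B, rfl, -, hBβ, -⟩ := hξ.exists_mk ht
  have hBE : Tr.mk β B β ∈ Λ.ESet := (hξ.2.1 _ ht).1
  have hcomp : β <+: α ∨ α <+: β := by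
    rcases eq_or_ne β [] with rfl | hβ
    · exact Or.inl List.nil_prefix
    · exact ((hw β hβ).1 ⟨B, ht⟩).prefix_or_prefix (wPrefix_wappend α γ)
  rcases hcomp with ⟨ρ, rfl⟩ | ⟨δ, rfl⟩
  · obtain ⟨D, hD⟩ := hw.exists_mk_mem hα
    have hprod := hξ.2.2.1 _ hD _ ht
    rw [tmul_mk_mk_of_prefix (List.prefix_append β ρ), List.drop_left] at hprod
    split_ifs at hprod with hne
    swap
    · exact absurd rfl (hξ.2.1 _ hprod).2
    have hcut : Tr.mk [] (D ∩ Λ.relRange B ρ) [] ∈ Λ.Hcut (β ++ ρ) ξ :=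
      (mk_mem_Hcut hα).2
        ⟨mem_Aset_nil.2 (hξ.of_mk_mem hprod).2.1.1, _, by simpa using hprod, subset_rfl⟩
    rw [h, mk_mem_Hcut hα] at hcut
    obtain ⟨-, D', hD', hD'sub⟩ := hcut
    exact hξ'.mk_mem_of_subset_relRange (by simpa using hD') hBE
      (hD'sub.trans Set.inter_subset_right)
  · have hcut : Tr.mk δ B δ ∈ Λ.Hcut α ξ :=
      (mk_mem_Hcut hα).2 ⟨⟨hBβ.1, hBβ.2.trans (rangeL_append_subset α δ)⟩, B, ht, subset_rfl⟩
    rw [h, mk_mem_Hcut hα] at hcut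
    obtain ⟨-, D, hD, hDB⟩ := hcut
    exact hξ'.mk_mem_of_subset_relRange (ρ := []) (by simpa using hD) hBE
      (by rwa [relRange_nil])

theorem eq_of_Hcut_eq (hξ : Λ.IsFilterES ξ) (hξ' : Λ.IsFilterES ξ')
    (hw : Λ.HasWord ξ (wappend α γ)) (hw' : Λ.HasWord ξ' (wappend α γ))
    (h : Λ.Hcut α ξ = Λ.Hcut α ξ') : ξ = ξ' := by
  rcases eq_or_ne α [] with rfl | hα
  · simpa [Hcut_nil] using h
  · exact (subset_of_Hcut_eq hξ hξ' hw hα h).antisymm (subset_of_Hcut_eq hξ' hξ hw' hα h.symm)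

end Filters

theorem TightT.ext {x y : Λ.TightT} (h : x.carrier = y.carrier) : x = y := by
  cases x
  cases y
  cases h
  rfl

theorem GammaT.ext {p q : Λ.GammaT} (hfst : p.fst = q.fst) (hmid : p.mid = q.mid)
    (hlst : p.lst = q.lst) : p = q := by
  cases p
  cases q
  cases hfst
  cases hmid
  cases hlst
  rfl

section Basis

variable {μ ν μ' ν' τ : List A} {γ : Word A} {e e' : Tr V A} {es es' : List (Tr V A)}
  {p q : Λ.GammaT}

variable (Λ) in
/-- The basic set `Z_{(μ,X,ν), e:es}` as a subset of `Γ`; it does not depend on `X`. -/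
def zSet (μ ν : List A) (e : Tr V A) (es : List (Tr V A)) : Set Λ.GammaT :=
  {p | Λ.rawOf p ∈ Λ.ZrawGen μ ν e es}

theorem mem_zSet :
    p ∈ Λ.zSet μ ν e es ↔ p.mid = (μ.length : ℤ) - ν.length ∧ e ∈ p.lst.carrier ∧
      (∀ f ∈ es, f ∉ p.lst.carrier) ∧ ∃ γ : Word A,
        Λ.HasWord p.fst.carrier (wappend μ γ) ∧ Λ.HasWord p.lst.carrier (wappend ν γ) ∧
        Λ.Hcut μ p.fst.carrier = Λ.Hcut ν p.lst.carrier :=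
  ⟨fun h => h.2, fun h => ⟨p.mem, h⟩⟩

theorem exists_mem_zSet (p : Λ.GammaT) (he : e ∈ p.lst.carrier)
    (hes : ∀ f ∈ es, f ∉ p.lst.carrier) : ∃ μ ν, p ∈ Λ.zSet μ ν e es := by
  obtain ⟨μ, ν, γ, -, -, -, hfst, hlst, hmid, hH⟩ := p.mem
  exact ⟨μ, ν, mem_zSet.2 ⟨hmid, he, hes, γ, hfst.2, hlst.2, hH⟩⟩

theorem exists_mem_Aset_inter (hp : p ∈ Λ.zSet μ ν e es) :
    ∃ X ∈ Λ.Aset μ ∩ Λ.Aset ν, X.Nonempty := by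
  obtain ⟨-, -, -, γ, hfst, hlst, hH⟩ := mem_zSet.1 hp
  have hξ := p.fst.tight.1
  have hη := p.lst.tight.1
  rcases eq_or_ne μ [] with rfl | hμ
  · obtain ⟨X, hX, hXne⟩ := hlst.exists_mem_Aset hη
    exact ⟨X, ⟨mem_Aset_nil.2 hX.1, hX⟩, hXne⟩
  rcases eq_or_ne ν [] with rfl | hν
  · obtain ⟨X, hX, hXne⟩ := hfst.exists_mem_Aset hξ
    exact ⟨X, ⟨hX, mem_Aset_nil.2 hX.1⟩, hXne⟩
  obtain ⟨D, hD⟩ := hfst.exists_mk_mem hμ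
  have hDμ := (hξ.of_mk_mem hD).2.1
  have hcut : Tr.mk [] D [] ∈ Λ.Hcut μ p.fst.carrier :=
    (mk_mem_Hcut hμ).2 ⟨mem_Aset_nil.2 hDμ.1, D, by simpa using hD, subset_rfl⟩
  rw [hH, mk_mem_Hcut hν] at hcut
  obtain ⟨-, X, hX, hXD⟩ := hcut
  obtain ⟨-, hXν, hXne⟩ := hη.of_mk_mem (by simpa using hX)
  exact ⟨X, ⟨⟨hXν.1, hXD.trans hDμ.2⟩, hXν⟩, hXne⟩

theorem zSet_mem_ZBasisT (hp : p ∈ Λ.zSet μ ν e es) (hes : ∀ f ∈ es, f ∈ Λ.ESet) :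
    Λ.zSet μ ν e es ∈ Λ.ZBasisT := by
  obtain ⟨-, he, -, γ, hfst, hlst, -⟩ := mem_zSet.1 hp
  obtain ⟨X, ⟨hXμ, hXν⟩, hXne⟩ := exists_mem_Aset_inter hp
  exact ⟨μ, X, ν, e, es, Or.inr ⟨μ, X, ν, rfl, hfst.mem_LStar p.fst.tight.1,
    hlst.mem_LStar p.lst.tight.1, hXμ, hXν, hXne⟩, (p.lst.tight.1.2.1 e he).1, hes, rfl⟩

theorem fst_eq_of_mem_zSet (hp : p ∈ Λ.zSet μ ν e es) (hq : q ∈ Λ.zSet μ ν e' es')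
    (hlst : p.lst = q.lst) : p.fst = q.fst := by
  obtain ⟨-, -, -, γ, hpf, hpl, hpH⟩ := mem_zSet.1 hp
  obtain ⟨-, -, -, γ', hqf, hql, hqH⟩ := mem_zSet.1 hq
  obtain rfl : γ = γ' := wappend_injective ν (hpl.unique (hlst ▸ hql))
  refine TightT.ext (eq_of_Hcut_eq p.fst.tight.1 q.fst.tight.1 hpf hqf ?_)
  rw [hpH, hqH, hlst]

theorem mem_zSet_append (hp : p ∈ Λ.zSet μ ν e es)
    (hw : Λ.HasWord p.lst.carrier (wappend (ν ++ τ) γ)) :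
    p ∈ Λ.zSet (μ ++ τ) (ν ++ τ) e es := by
  obtain ⟨hmid, he, hes, γ', hf, hl, hH⟩ := mem_zSet.1 hp
  obtain rfl : γ' = wappend τ γ :=
    wappend_injective ν ((hl.unique hw).trans (wappend_append ν τ γ))
  refine mem_zSet.2 ⟨by simp [hmid], he, hes, γ, ?_, hw, ?_⟩
  · rwa [wappend_append]
  · rw [Hcut_append p.fst.tight.1, Hcut_append p.lst.tight.1, hH]

theorem disjoint_zSet_of_mem (he : e ∈ es') :
    Disjoint (Λ.zSet μ ν e es) (Λ.zSet μ' ν' e' es') :=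
  Set.disjoint_left.2 fun _ hr hr' => (mem_zSet.1 hr').2.2.1 e he (mem_zSet.1 hr).2.1

theorem disjoint_zSet_of_ne (hμ : μ ≠ μ') :
    Disjoint (Λ.zSet μ ν e es) (Λ.zSet μ' ν e' es') := by
  refine Set.disjoint_left.2 fun r hr hr' => hμ ?_
  obtain ⟨hmid, -, -, γ, hf, hl, -⟩ := mem_zSet.1 hr
  obtain ⟨hmid', -, -, γ', hf', hl', -⟩ := mem_zSet.1 hr'
  obtain rfl : γ = γ' := wappend_injective ν (hl.unique hl')
  exact eq_of_wappend_eq (by omega) (hf.unique hf')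

variable (Λ) in
def ZSeparated (p q : Λ.GammaT) : Prop :=
  ∃ u ∈ Λ.ZBasisT, ∃ v ∈ Λ.ZBasisT, p ∈ u ∧ q ∈ v ∧ Disjoint u v

theorem ZSeparated.symm (h : Λ.ZSeparated p q) : Λ.ZSeparated q p := by
  obtain ⟨u, hu, v, hv, hpu, hqv, huv⟩ := h
  exact ⟨v, hv, u, hu, hqv, hpu, huv.symm⟩

theorem zSeparated_of_mem_of_not_mem (he : e ∈ p.lst.carrier) (hne : e ∉ q.lst.carrier) :
    Λ.ZSeparated p q := by
  obtain ⟨e', he'⟩ := q.lst.tight.1.1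
  obtain ⟨μ, ν, hp⟩ := exists_mem_zSet p he (es := []) (by simp)
  obtain ⟨μ', ν', hq⟩ := exists_mem_zSet q he' (es := [e]) (by simpa)
  exact ⟨_, zSet_mem_ZBasisT hp (by simp), _,
    zSet_mem_ZBasisT hq (by simpa using (p.lst.tight.1.2.1 e he).1), hp, hq,
    disjoint_zSet_of_mem (List.mem_singleton_self e)⟩

theorem zSeparated_of_lst_eq_of_length_le (hp : p ∈ Λ.zSet μ ν e [])
    (hq : q ∈ Λ.zSet μ' ν' e' []) (hlen : ν.length ≤ ν'.length) (hlst : p.lst = q.lst)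
    (hpq : p ≠ q) : Λ.ZSeparated p q := by
  obtain ⟨-, -, -, γ, -, hpl, -⟩ := mem_zSet.1 hp
  obtain ⟨hmid', -, -, γ', -, hql, -⟩ := mem_zSet.1 hq
  obtain ⟨τ, rfl, -⟩ := wappend_eq_wappend_of_length_le (hpl.unique (hlst ▸ hql)) hlen
  have hp' := mem_zSet_append hp (hlst ▸ hql)
  have hμ : μ ++ τ ≠ μ' := by
    rintro rfl
    exact hpq (GammaT.ext (fst_eq_of_mem_zSet hp' hq hlst)
      (by rw [(mem_zSet.1 hp').1, hmid']) hlst)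
  exact ⟨_, zSet_mem_ZBasisT hp' (by simp), _, zSet_mem_ZBasisT hq (by simp), hp', hq,
    disjoint_zSet_of_ne hμ⟩

theorem zSeparated_of_ne (hpq : p ≠ q) : Λ.ZSeparated p q := by
  by_cases hlst : p.lst = q.lst
  · obtain ⟨e, he⟩ := p.lst.tight.1.1
    obtain ⟨e', he'⟩ := q.lst.tight.1.1
    obtain ⟨μ, ν, hp⟩ := exists_mem_zSet p he (es := []) (by simp)
    obtain ⟨μ', ν', hq⟩ := exists_mem_zSet q he' (es := []) (by simp)
    rcases le_total ν.length ν'.length with hlen | hlen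
    · exact zSeparated_of_lst_eq_of_length_le hp hq hlen hlst hpq
    · exact (zSeparated_of_lst_eq_of_length_le hq hp hlen hlst.symm hpq.symm).symm
  · obtain ⟨e, he⟩ := Set.symmDiff_nonempty.2 fun h => hlst (TightT.ext h)
    rcases Set.mem_symmDiff.1 he with ⟨hp, hq⟩ | ⟨hq, hp⟩
    · exact zSeparated_of_mem_of_not_mem hp hq
    · exact (zSeparated_of_mem_of_not_mem hq hp).symm

end Basis

end LblSp

namespace LblSp

variable {V : Type u} {Ed : Type v} {A : Type w} (Λ : LblSp V Ed A)

theorem statement_4 :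
    @T2Space Λ.GammaT (TopologicalSpace.generateFrom Λ.ZBasisT) := by
  let _ := TopologicalSpace.generateFrom Λ.ZBasisT
  refine ⟨fun p q hpq => ?_⟩
  obtain ⟨u, hu, v, hv, hpu, hqv, huv⟩ := zSeparated_of_ne hpq
  exact ⟨u, v, .basic u hu, .basic v hv, hpu, hqv, huv⟩

end LblSp
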